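/- Let (ν_n)_{n≥1} and ν be probability densities in L¹(μ) on a measure space (E, μ), and suppose ∫ g ν_n dμ → ∫ g ν dμ for every g ∈ L^∞(μ) (weak convergence in L¹). Then the family {ν_n : n ≥ 1} is uniformly integrable: for every ε > 0 there exists δ > 0 such that for all measurable A with μ(A) < δ, sup_n ∫_A ν_n dμ < ε. -/

import Mathlib

/-!
If uniform integrability failed at level `ε`, every finite family being uniformly integrable
would force arbitrarily small sets `A` carrying mass `≥ ε` of `ν n` for arbitrarily large `n`.
Choosing such sets `A k` for a subsequence `n k` with summable measures, their union `U` has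
small measure, so `∫_U ν'` is small by absolute continuity of the integral; yet testing the weak
convergence against `1_U` gives `∫_U ν' = lim ∫_U ν (n k) ≥ ε` by positivity.
-/

open MeasureTheory Filter
open scoped ENNReal

section

variable {E : Type*} [MeasurableSpace E] {μ : Measure E}

theorem MeasureTheory.UnifIntegrable.exists_setIntegral_lt {ι : Type*} {f : ι → E → ℝ}
    (hf : UnifIntegrable f 1 μ) {ε : ℝ} (hε : 0 < ε) :
    ∃ δ : ℝ, 0 < δ ∧ ∀ i s, MeasurableSet s → μ s < ENNReal.ofReal δ →
      ∫ x in s, f i x ∂μ < ε := by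
  obtain ⟨δ, hδ, hsmall⟩ := hf (half_pos hε)
  refine ⟨δ, hδ, fun i s hs hμs => ?_⟩
  calc ∫ x in s, f i x ∂μ ≤ ‖∫ x, s.indicator (f i) x ∂μ‖ := by
        rw [integral_indicator hs]; exact Real.le_norm_self _
    _ ≤ (eLpNorm (s.indicator (f i)) 1 μ).toReal := by
        rw [eLpNorm_one_eq_lintegral_enorm]
        simpa only [ofReal_norm] using
          norm_integral_le_lintegral_norm (μ := μ) (s.indicator (f i))
    _ ≤ ε / 2 := ENNReal.toReal_le_of_le_ofReal (half_pos hε).le (hsmall i s hs hμs.le)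
    _ < ε := half_lt_self hε

theorem frequently_exists_setIntegral_ge_of_forall_exists {ν : ℕ → E → ℝ}
    (hint : ∀ n, Integrable (ν n) μ) {ε : ℝ} (hε : 0 < ε)
    (hbad : ∀ δ, 0 < δ → ∃ A, MeasurableSet A ∧ μ A < ENNReal.ofReal δ ∧
      ∃ n, ε ≤ ∫ x in A, ν n x ∂μ) {δ : ℝ} (hδ : 0 < δ) :
    ∃ᶠ n in atTop, ∃ A, MeasurableSet A ∧ μ A < ENNReal.ofReal δ ∧
      ε ≤ ∫ x in A, ν n x ∂μ := by
  rw [frequently_atTop]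
  intro m
  obtain ⟨δ₀, hδ₀, hsmall⟩ := (unifIntegrable_fin le_rfl ENNReal.one_ne_top
    (f := fun i : Fin m => ν i) fun i => memLp_one_iff_integrable.2 (hint i)).exists_setIntegral_lt
      hε
  obtain ⟨A, hA, hAμ, n, hn⟩ := hbad (min δ δ₀) (lt_min hδ hδ₀)
  refine ⟨n, ?_, A, hA, hAμ.trans_le (ENNReal.ofReal_le_ofReal (min_le_left _ _)), hn⟩
  by_contra! hnm
  exact (hsmall ⟨n, hnm⟩ A hA
    (hAμ.trans_le (ENNReal.ofReal_le_ofReal (min_le_right _ _)))).not_ge hn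

theorem tendsto_setIntegral_of_tendsto_integral_mul {ν : ℕ → E → ℝ} {ν' : E → ℝ}
    (hweak : ∀ g : E → ℝ, Measurable g → (∃ B, ∀ x, |g x| ≤ B) →
      Tendsto (fun n => ∫ x, g x * ν n x ∂μ) atTop (nhds (∫ x, g x * ν' x ∂μ)))
    {A : Set E} (hA : MeasurableSet A) :
    Tendsto (fun n => ∫ x in A, ν n x ∂μ) atTop (nhds (∫ x in A, ν' x ∂μ)) := by
  have hmul : ∀ f : E → ℝ, (fun x => A.indicator 1 x * f x) = A.indicator f := fun f => by
    funext x
    rw [← Set.indicator_mul_left]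
    simp only [Pi.one_apply, one_mul]
  have hbdd : ∃ B, ∀ x, |A.indicator (1 : E → ℝ) x| ≤ B :=
    ⟨1, fun x => by by_cases hx : x ∈ A <;> simp [hx]⟩
  simpa only [hmul, integral_indicator hA] using
    hweak (A.indicator 1) (measurable_one.indicator hA) hbdd

end

theorem stmt_16_general {E : Type*} [MeasurableSpace E] (μ : Measure E)
    (ν : ℕ → E → ℝ) (ν' : E → ℝ)
    (hint : ∀ n, Integrable (ν n) μ) (hint' : Integrable ν' μ)
    (hnn : ∀ n x, 0 ≤ ν n x)
    (hweak : ∀ g : E → ℝ, Measurable g → (∃ B, ∀ x, |g x| ≤ B) →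
      Tendsto (fun n => ∫ x, g x * ν n x ∂μ) atTop (nhds (∫ x, g x * ν' x ∂μ))) :
    ∀ ε : ℝ, 0 < ε → ∃ δ : ℝ, 0 < δ ∧ ∀ A : Set E, MeasurableSet A →
      μ A < ENNReal.ofReal δ → ∀ n, ∫ x in A, ν n x ∂μ < ε := by
  intro ε hε
  by_contra! hbad
  obtain ⟨δ, hδ, hν'⟩ := (unifIntegrable_const (ι := Unit) le_rfl ENNReal.one_ne_top
    (memLp_one_iff_integrable.2 hint')).exists_setIntegral_lt hε
  obtain ⟨c, hc, hcsum⟩ := ENNReal.exists_pos_sum_of_countable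
    (ENNReal.ofReal_pos.2 hδ).ne' ℕ
  obtain ⟨φ, hφ, hA⟩ := extraction_forall_of_frequently fun k =>
    frequently_exists_setIntegral_ge_of_forall_exists hint hε hbad (NNReal.coe_pos.2 (hc k))
  choose A hAm hAμ hAν using hA
  have hUμ : μ (⋃ k, A k) < ENNReal.ofReal δ := calc
    μ (⋃ k, A k) ≤ ∑' k, μ (A k) := measure_iUnion_le _
    _ ≤ ∑' k, (c k : ℝ≥0∞) :=
      ENNReal.tsum_le_tsum fun k => by simpa only [ENNReal.ofReal_coe_nnreal] using (hAμ k).le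
    _ < ENNReal.ofReal δ := hcsum
  have hUm : MeasurableSet (⋃ k, A k) := .iUnion hAm
  have hUν : ∀ k, ε ≤ ∫ x in ⋃ k, A k, ν (φ k) x ∂μ := fun k =>
    (hAν k).trans (setIntegral_mono_set (hint _).integrableOn
      (.of_forall (hnn _)) (Set.subset_iUnion A k).eventuallyLE)
  have hlim := (tendsto_setIntegral_of_tendsto_integral_mul hweak hUm).comp
    hφ.tendsto_atTop
  exact (ge_of_tendsto' hlim hUν).not_gt (hν' () _ hUm hUμ)

/-- Dunford–Pettis step: a sequence of probability densities converging weakly in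
L¹(μ) (tested against all bounded measurable functions) is uniformly integrable. -/
theorem stmt_16 {E : Type*} [MeasurableSpace E] (μ : Measure E)
    (ν : ℕ → E → ℝ) (ν' : E → ℝ)
    (hint : ∀ n, Integrable (ν n) μ) (hint' : Integrable ν' μ)
    (hnn : ∀ n x, 0 ≤ ν n x) (hnn' : ∀ x, 0 ≤ ν' x)
    (hprob : ∀ n, ∫ x, ν n x ∂μ = 1) (hprob' : ∫ x, ν' x ∂μ = 1)
    (hweak : ∀ g : E → ℝ, Measurable g → (∃ B, ∀ x, |g x| ≤ B) →
      Tendsto (fun n => ∫ x, g x * ν n x ∂μ) atTop (nhds (∫ x, g x * ν' x ∂μ))) :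
    ∀ ε : ℝ, 0 < ε → ∃ δ : ℝ, 0 < δ ∧ ∀ A : Set E, MeasurableSet A →
      μ A < ENNReal.ofReal δ → ∀ n, ∫ x in A, ν n x ∂μ < ε :=
  stmt_16_general μ ν ν' hint hint' hnn hweak
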